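/- arXiv:1304.1230 — 4 statements merged into one kernel-verified Lean document; each statement's English description precedes it below -/
import Mathlib

section
/- Let (μ_n)_{n≥1} be Borel probability measures on ℝ, each with finite second moment; write m_n for the mean of μ_n, m₂(μ_n) for its second moment, and v_n for its variance. Let (b_n)_{n≥1} be real numbers with 0 < b_1 < b_2 < ⋯ and b_n → ∞ such that ∑_{k=1}^∞ v_k / b_k² < ∞. Let (X_n)_{n≥1} be a sequence of real random variables on a probability space, adapted to a filtration (𝓕_n), such that X_1 has distribution μ_1 and for each n ≥ 2 the conditional distribution of X_n given 𝓕_{n-1} is p_n(X_{n-1}, ·), where p_n is a Markov transition kernel on ℝ satisfying ∫ y p_n(x, dy) = x + m_n and ∫ y² p_n(x, dy) = x² + 2 m_n x + m₂(μ_n) for every x ∈ ℝ. Then (X_n − ∑_{k=1}^n m_k)/b_n converges to 0 in probability as n → ∞. -/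
/-!
The law `νₙ` of `Xₙ` satisfies `νₙ = pₙ ∘ₘ νₙ₋₁`: integrate the conditional-distribution identity.
Along this recursion the mean grows by `mₙ` and the variance by `m₂(μₙ) - mₙ² = vₙ`, since
`pₙ(x, ·)` has mean `x + mₙ` and variance `vₙ` whatever `x` is; hence `Xₙ` has mean `∑ₖ₌₁ⁿ mₖ`
and variance `∑ₖ₌₁ⁿ vₖ`. By Chebyshev's inequality it remains to see `(∑ₖ₌₁ⁿ vₖ) / bₙ² → 0`,
which is Kronecker's lemma: dominated convergence for the series
`∑ₖ (vₖ / bₖ²) (bₖ² / bₙ²) 1[k ≤ n]`, dominated by the summable `vₖ / bₖ²`.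
-/

open MeasureTheory ProbabilityTheory Filter Topology

theorem tendsto_sum_range_succ_div_of_summable_div {a w : ℕ → ℝ} (ha : ∀ k, 0 ≤ a k)
    (hw_pos : ∀ k, 0 < w k) (hw_mono : Monotone w) (hw_top : Tendsto w atTop atTop)
    (hsum : Summable fun k => a k / w k) :
    Tendsto (fun n => (∑ k ∈ Finset.range (n + 1), a k) / w n) atTop (𝓝 0) := by
  let f : ℕ → ℕ → ℝ := fun n k => if k ≤ n then a k / w n else 0
  have hf : ∀ n, ∑' k, f n k = (∑ k ∈ Finset.range (n + 1), a k) / w n := fun n => by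
    rw [tsum_eq_sum (s := Finset.range (n + 1)) fun k hk => if_neg (by simpa using hk),
      Finset.sum_div]
    exact Finset.sum_congr rfl fun k hk => if_pos (Nat.lt_succ_iff.mp (Finset.mem_range.mp hk))
  have hlim : ∀ k, Tendsto (f · k) atTop (𝓝 0) := fun k =>
    (tendsto_const_nhds.div_atTop hw_top).congr' <|
      (eventually_ge_atTop k).mono fun n hn => (if_pos hn).symm
  have hbound : ∀ n k, ‖f n k‖ ≤ a k / w k := fun n k => by
    by_cases hkn : k ≤ n
    · simp only [f, if_pos hkn]
      rw [Real.norm_of_nonneg (div_nonneg (ha k) (hw_pos n).le)]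
      exact div_le_div_of_nonneg_left (ha k) (hw_pos k) (hw_mono hkn)
    · simp only [f, if_neg hkn, norm_zero]
      exact div_nonneg (ha k) (hw_pos k).le
  simpa [hf] using tendsto_tsum_of_dominated_convergence hsum hlim (Eventually.of_forall hbound)

theorem tendsto_sum_Icc_div_sq_of_summable {v b : ℕ → ℝ} (hv : ∀ k, 0 ≤ v k) (hb1 : 0 < b 1)
    (hb_mono : ∀ n, 1 ≤ n → b n ≤ b (n + 1)) (hb_top : Tendsto b atTop atTop)
    (hsum : Summable fun k => v (k + 1) / b (k + 1) ^ 2) :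
    Tendsto (fun n => (∑ k ∈ Finset.Icc 1 n, v k) / b n ^ 2) atTop (𝓝 0) := by
  have hb_succ_mono : Monotone fun k => b (k + 1) :=
    monotone_nat_of_le_succ fun k => hb_mono (k + 1) (by omega)
  have hb_succ_pos (k : ℕ) : 0 < b (k + 1) := hb1.trans_le (hb_succ_mono (Nat.zero_le k))
  have h := tendsto_sum_range_succ_div_of_summable_div (a := fun k => v (k + 1))
    (fun k => hv (k + 1)) (fun k => pow_pos (hb_succ_pos k) 2)
    (fun i j hij => pow_le_pow_left₀ (hb_succ_pos i).le (hb_succ_mono hij) 2)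
    ((tendsto_pow_atTop two_ne_zero).comp (hb_top.comp (tendsto_add_atTop_nat 1))) hsum
  refine (tendsto_add_atTop_iff_nat 1).mp (h.congr fun n => ?_)
  rw [Finset.range_eq_Ico, Finset.sum_Ico_add' v, ← Finset.Ico_add_one_right_eq_Icc]

theorem tendstoInMeasure_sub_integral_div_of_tendsto_variance_div_sq {Ω : Type*}
    {mΩ : MeasurableSpace Ω} {P : Measure Ω} [IsFiniteMeasure P] {Y : ℕ → Ω → ℝ}
    (hY : ∀ᶠ n in atTop, MemLp (Y n) 2 P) {b : ℕ → ℝ}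
    (hvar : Tendsto (fun n => variance (Y n) P / b n ^ 2) atTop (𝓝 0)) :
    TendstoInMeasure P (fun n ω => (Y n ω - P[Y n]) / b n) atTop 0 := by
  rw [tendstoInMeasure_iff_dist]
  intro ε hε
  have hcheb : ∀ᶠ n in atTop, P {ω | ε ≤ dist ((Y n ω - P[Y n]) / b n) 0}
      ≤ ENNReal.ofReal (variance (Y n) P / b n ^ 2 / ε ^ 2) := by
    filter_upwards [hY] with n hYn
    rcases eq_or_ne (b n) 0 with hb | hb
    · simp [hb, hε.not_ge]
    have hset : {ω | ε ≤ dist ((Y n ω - P[Y n]) / b n) 0}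
        = {ω | |b n| * ε ≤ |Y n ω - P[Y n]|} := by
      ext ω
      simp [le_div_iff₀ (abs_pos.mpr hb), mul_comm]
    rw [hset, div_div, ← sq_abs (b n), ← mul_pow]
    exact meas_ge_le_variance_div_sq hYn (mul_pos (abs_pos.mpr hb) hε)
  have hlim := ENNReal.tendsto_ofReal (hvar.div_const (ε ^ 2))
  rw [zero_div, ENNReal.ofReal_zero] at hlim
  exact tendsto_of_tendsto_of_tendsto_of_le_of_le' tendsto_const_nhds hlim
    (Eventually.of_forall fun _ => zero_le) hcheb

theorem MeasureTheory.Measure.integral_comp {α β E : Type*} [MeasurableSpace α]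
    [MeasurableSpace β] [NormedAddCommGroup E] [NormedSpace ℝ E] {μ : Measure α}
    {κ : Kernel α β} {f : β → E} (hf : Integrable f (κ ∘ₘ μ)) :
    ∫ y, f y ∂(κ ∘ₘ μ) = ∫ x, ∫ y, f y ∂κ x ∂μ := by
  rw [Measure.comp_eq_comp_const_apply] at hf ⊢
  rw [Kernel.integral_comp hf]
  simp

lemma integrable_id_of_integrable_sq {ν : Measure ℝ} [IsFiniteMeasure ν]
    (h : Integrable (fun x => x ^ 2) ν) : Integrable (fun x => x) ν :=
  ((memLp_two_iff_integrable_sq aestronglyMeasurable_id).2 h).integrable one_le_two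

lemma variance_id_eq_sub {ν : Measure ℝ} [IsProbabilityMeasure ν]
    (h : Integrable (fun x => x ^ 2) ν) :
    Var[id; ν] = ∫ x, x ^ 2 ∂ν - (∫ x, x ∂ν) ^ 2 :=
  variance_eq_sub ((memLp_two_iff_integrable_sq aestronglyMeasurable_id).2 h)

section KernelMoments

variable {ν : Measure ℝ} {κ : Kernel ℝ ℝ} {c d : ℝ}

lemma integrable_sq_comp [IsFiniteMeasure ν] (hκ : ∀ x, Integrable (fun y => y ^ 2) (κ x))
    (hν : Integrable (fun x => x ^ 2) ν) (hsq : ∀ x, ∫ y, y ^ 2 ∂κ x = x ^ 2 + 2 * c * x + d) :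
    Integrable (fun y => y ^ 2) (κ ∘ₘ ν) := by
  rw [Measure.integrable_comp_iff (by fun_prop)]
  refine ⟨ae_of_all _ hκ, ?_⟩
  simp_rw [Real.norm_of_nonneg (sq_nonneg _), hsq]
  exact (hν.add ((integrable_id_of_integrable_sq hν).const_mul _)).add (integrable_const d)

lemma integral_comp_of_integral_eq_add [IsProbabilityMeasure ν] [IsFiniteKernel κ]
    (hκ : ∀ x, Integrable (fun y => y ^ 2) (κ x)) (hν : Integrable (fun x => x ^ 2) ν)
    (hsq : ∀ x, ∫ y, y ^ 2 ∂κ x = x ^ 2 + 2 * c * x + d)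
    (hmean : ∀ x, ∫ y, y ∂κ x = x + c) :
    ∫ y, y ∂(κ ∘ₘ ν) = ∫ x, x ∂ν + c := by
  have h := integrable_id_of_integrable_sq (integrable_sq_comp hκ hν hsq)
  simp_rw [Measure.integral_comp h, hmean]
  rw [integral_add (integrable_id_of_integrable_sq hν) (integrable_const c)]
  simp

lemma integral_sq_comp [IsProbabilityMeasure ν] (hκ : ∀ x, Integrable (fun y => y ^ 2) (κ x))
    (hν : Integrable (fun x => x ^ 2) ν) (hsq : ∀ x, ∫ y, y ^ 2 ∂κ x = x ^ 2 + 2 * c * x + d) :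
    ∫ y, y ^ 2 ∂(κ ∘ₘ ν) = ∫ x, x ^ 2 ∂ν + 2 * c * ∫ x, x ∂ν + d := by
  have h1 := integrable_id_of_integrable_sq hν
  simp_rw [Measure.integral_comp (integrable_sq_comp hκ hν hsq), hsq]
  rw [integral_add (f := fun x => x ^ 2 + 2 * c * x) (hν.add (h1.const_mul _)) (integrable_const d),
    integral_add hν (h1.const_mul _), integral_const_mul]
  simp

lemma variance_id_comp [IsProbabilityMeasure ν] [IsMarkovKernel κ]
    (hκ : ∀ x, Integrable (fun y => y ^ 2) (κ x)) (hν : Integrable (fun x => x ^ 2) ν)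
    (hsq : ∀ x, ∫ y, y ^ 2 ∂κ x = x ^ 2 + 2 * c * x + d)
    (hmean : ∀ x, ∫ y, y ∂κ x = x + c) :
    Var[id; κ ∘ₘ ν] = Var[id; ν] + (d - c ^ 2) := by
  rw [variance_id_eq_sub (integrable_sq_comp hκ hν hsq), variance_id_eq_sub hν,
    integral_sq_comp hκ hν hsq, integral_comp_of_integral_eq_add hκ hν hsq hmean]
  ring

end KernelMoments

lemma moments_of_comp_chain {ν : ℕ → Measure ℝ} [∀ n, IsProbabilityMeasure (ν n)]
    {κ : ℕ → Kernel ℝ ℝ} [∀ n, IsMarkovKernel (κ n)] {c s : ℕ → ℝ}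
    (hrec : ∀ n, 1 ≤ n → ν (n + 1) = κ (n + 1) ∘ₘ ν n)
    (hκ : ∀ n, 2 ≤ n → ∀ x, Integrable (fun y => y ^ 2) (κ n x))
    (hmean : ∀ n, 2 ≤ n → ∀ x, ∫ y, y ∂κ n x = x + c n)
    (hsq : ∀ n, 2 ≤ n → ∀ x, ∫ y, y ^ 2 ∂κ n x = x ^ 2 + 2 * c n * x + (s n + c n ^ 2))
    (h1 : Integrable (fun x => x ^ 2) (ν 1)) (hmean1 : ∫ x, x ∂ν 1 = c 1)
    (hvar1 : Var[id; ν 1] = s 1) :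
    ∀ n, 1 ≤ n → Integrable (fun x => x ^ 2) (ν n) ∧ ∫ x, x ∂ν n = ∑ k ∈ Finset.Icc 1 n, c k ∧
      Var[id; ν n] = ∑ k ∈ Finset.Icc 1 n, s k := by
  intro n hn
  induction n, hn using Nat.le_induction with
  | base => simpa using ⟨h1, hmean1, hvar1⟩
  | succ n hn ih =>
    obtain ⟨hint, hmean_n, hvar_n⟩ := ih
    have h2 : 2 ≤ n + 1 := by omega
    rw [hrec n hn, Finset.sum_Icc_succ_top (by omega), Finset.sum_Icc_succ_top (by omega)]
    refine ⟨integrable_sq_comp (hκ _ h2) hint (hsq _ h2), ?_, ?_⟩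
    · rw [integral_comp_of_integral_eq_add (hκ _ h2) hint (hsq _ h2) (hmean _ h2), hmean_n]
    · rw [variance_id_comp (hκ _ h2) hint (hsq _ h2) (hmean _ h2), hvar_n]
      ring

lemma map_eq_comp_of_condExp_indicator {Ω α β : Type*} [MeasurableSpace α] [MeasurableSpace β]
    {m mΩ : MeasurableSpace Ω} (hm : m ≤ mΩ) {P : Measure Ω} [IsFiniteMeasure P] {W : Ω → α}
    {Y : Ω → β} (hW : Measurable W) (hY : Measurable Y) {κ : Kernel α β} [IsFiniteKernel κ]
    (hcond : ∀ B, MeasurableSet B →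
      P[(Y ⁻¹' B).indicator (fun _ => (1 : ℝ)) | m] =ᵐ[P] fun ω => (κ (W ω) B).toReal) :
    P.map Y = κ ∘ₘ P.map W := by
  ext B hB
  refine (ENNReal.toReal_eq_toReal_iff' (measure_ne_top _ _) (measure_ne_top _ _)).mp ?_
  rw [Measure.map_apply hY hB, Measure.bind_apply hB κ.aemeasurable,
    lintegral_map (κ.measurable_coe hB) hW]
  calc (P (Y ⁻¹' B)).toReal
      = ∫ ω, (Y ⁻¹' B).indicator (fun _ => (1 : ℝ)) ω ∂P := by
        simp [integral_indicator_const _ (hY hB), Measure.real]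
    _ = ∫ ω, (κ (W ω) B).toReal ∂P := by
        rw [← integral_condExp hm, integral_congr_ae (hcond B hB)]
    _ = (∫⁻ ω, κ (W ω) B ∂P).toReal :=
        integral_toReal ((κ.measurable_coe hB).comp hW).aemeasurable
          (ae_of_all _ fun ω => measure_lt_top _ _)

theorem monotone_lln_markov_chain_general
    {Ω : Type*} {mΩ : MeasurableSpace Ω} (P : Measure Ω) [IsProbabilityMeasure P]
    (μ : ℕ → Measure ℝ) [∀ n, IsProbabilityMeasure (μ n)]
    (hμ2 : ∀ n, 1 ≤ n → Integrable (fun t : ℝ => t ^ 2) (μ n))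
    (m m₂ v : ℕ → ℝ)
    (hm : ∀ n, m n = ∫ t : ℝ, t ∂(μ n))
    (hm₂ : ∀ n, m₂ n = ∫ t : ℝ, t ^ 2 ∂(μ n))
    (hv : ∀ n, v n = ProbabilityTheory.variance id (μ n))
    (b : ℕ → ℝ) (hb1 : 0 < b 1) (hbmono : ∀ n, 1 ≤ n → b n < b (n + 1))
    (hbtop : Tendsto b atTop atTop)
    (hsum : Summable fun k : ℕ => v (k + 1) / b (k + 1) ^ 2)
    (𝓕 : Filtration ℕ mΩ)
    (X : ℕ → Ω → ℝ) (hXmeas : ∀ n, Measurable (X n))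
    (hX1 : P.map (X 1) = μ 1)
    (p : ℕ → Kernel ℝ ℝ) [∀ n, IsMarkovKernel (p n)]
    (hpint : ∀ n, 2 ≤ n → ∀ x : ℝ, Integrable (fun y : ℝ => y ^ 2) (p n x))
    (hpmean : ∀ n, 2 ≤ n → ∀ x : ℝ, (∫ y : ℝ, y ∂(p n x)) = x + m n)
    (hpsq : ∀ n, 2 ≤ n → ∀ x : ℝ,
      (∫ y : ℝ, y ^ 2 ∂(p n x)) = x ^ 2 + 2 * m n * x + m₂ n)
    (hcond : ∀ n, 2 ≤ n → ∀ B : Set ℝ, MeasurableSet B →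
      P[(X n ⁻¹' B).indicator (fun _ => (1 : ℝ)) | 𝓕 (n - 1)]
        =ᵐ[P] fun ω => (p n (X (n - 1) ω) B).toReal) :
    TendstoInMeasure P
      (fun n ω => (X n ω - ∑ k ∈ Finset.Icc 1 n, m k) / b n) atTop 0 := by
  have hm₂v : ∀ n, 1 ≤ n → m₂ n = v n + m n ^ 2 := fun n hn => by
    rw [hv, hm, hm₂, variance_id_eq_sub (hμ2 n hn)]; ring
  have _ (n : ℕ) : IsProbabilityMeasure (P.map (X n)) :=
    Measure.isProbabilityMeasure_map (hXmeas n).aemeasurable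
  have hmoments := moments_of_comp_chain (ν := fun n => P.map (X n)) (c := m) (s := v)
    (fun n hn => map_eq_comp_of_condExp_indicator (𝓕.le n) (hXmeas n) (hXmeas (n + 1))
      (by simpa using hcond (n + 1) (by omega)))
    hpint hpmean (fun n hn x => by rw [hpsq n hn x, hm₂v n (by omega)])
    (hX1 ▸ hμ2 1 le_rfl) (by rw [hX1, hm]) (by rw [hX1, hv])
  have hX_moments : ∀ n, 1 ≤ n → MemLp (X n) 2 P ∧ P[X n] = ∑ k ∈ Finset.Icc 1 n, m k ∧
      variance (X n) P = ∑ k ∈ Finset.Icc 1 n, v k := fun n hn => by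
    obtain ⟨hint, hmean, hvar⟩ := hmoments n hn
    refine ⟨(memLp_map_measure_iff aestronglyMeasurable_id (hXmeas n).aemeasurable).1
      ((memLp_two_iff_integrable_sq aestronglyMeasurable_id).2 hint), ?_, ?_⟩
    · rw [← hmean, integral_map (hXmeas n).aemeasurable measurable_id'.aestronglyMeasurable]
    · rwa [variance_map aemeasurable_id (hXmeas n).aemeasurable] at hvar
  have hvar := tendsto_sum_Icc_div_sq_of_summable (fun k => hv k ▸ variance_nonneg _ _) hb1
    (fun n hn => (hbmono n hn).le) hbtop hsum
  refine (tendstoInMeasure_sub_integral_div_of_tendsto_variance_div_sq (Y := X) (b := b) ?_ ?_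
    ).congr' ?_ EventuallyEq.rfl
  · filter_upwards [eventually_ge_atTop 1] with n hn using (hX_moments n hn).1
  · refine hvar.congr' ?_
    filter_upwards [eventually_ge_atTop 1] with n hn using by rw [(hX_moments n hn).2.2]
  · filter_upwards [eventually_ge_atTop 1] with n hn
    exact .of_eq (by rw [(hX_moments n hn).2.1])

/-- Theorem 1.1, Markov chain form: Let `(μ_n)_{n≥1}` be Borel
probability laws on `ℝ` with finite second moments, means `m_n`, second moments
`m₂ n`, and variances `v_n`. Let `0 < b_1 < b_2 < ⋯ → ∞` with
`∑_{k≥1} v_k / b_k² < ∞`. Let `(X_n)_{n≥1}` be adapted to a filtration `(𝓕_n)`,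
with `X_1 ∼ μ_1` and, for `n ≥ 2`, the conditional distribution of `X_n` given
`𝓕_{n-1}` equal to `p_n(X_{n-1}, ·)`, where the Markov kernels `p_n` satisfy
`∫ y p_n(x,dy) = x + m_n` and `∫ y² p_n(x,dy) = x² + 2 m_n x + m₂(μ_n)` for all `x`.
Then `(X_n - ∑_{k=1}^n m_k)/b_n → 0` in probability. -/
theorem monotone_lln_markov_chain
    {Ω : Type*} {mΩ : MeasurableSpace Ω} (P : Measure Ω) [IsProbabilityMeasure P]
    (μ : ℕ → Measure ℝ) [∀ n, IsProbabilityMeasure (μ n)]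
    (hμ2 : ∀ n, 1 ≤ n → Integrable (fun t : ℝ => t ^ 2) (μ n))
    (m m₂ v : ℕ → ℝ)
    (hm : ∀ n, m n = ∫ t : ℝ, t ∂(μ n))
    (hm₂ : ∀ n, m₂ n = ∫ t : ℝ, t ^ 2 ∂(μ n))
    (hv : ∀ n, v n = ProbabilityTheory.variance id (μ n))
    (b : ℕ → ℝ) (hb1 : 0 < b 1) (hbmono : ∀ n, 1 ≤ n → b n < b (n + 1))
    (hbtop : Tendsto b atTop atTop)
    (hsum : Summable fun k : ℕ => v (k + 1) / b (k + 1) ^ 2)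
    (𝓕 : Filtration ℕ mΩ)
    (X : ℕ → Ω → ℝ) (hXmeas : ∀ n, Measurable (X n)) (hadapted : StronglyAdapted 𝓕 X)
    (hX1 : P.map (X 1) = μ 1)
    (p : ℕ → Kernel ℝ ℝ) [∀ n, IsMarkovKernel (p n)]
    (hpint : ∀ n, 2 ≤ n → ∀ x : ℝ, Integrable (fun y : ℝ => y ^ 2) (p n x))
    (hpmean : ∀ n, 2 ≤ n → ∀ x : ℝ, (∫ y : ℝ, y ∂(p n x)) = x + m n)
    (hpsq : ∀ n, 2 ≤ n → ∀ x : ℝ,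
      (∫ y : ℝ, y ^ 2 ∂(p n x)) = x ^ 2 + 2 * m n * x + m₂ n)
    (hcond : ∀ n, 2 ≤ n → ∀ B : Set ℝ, MeasurableSet B →
      P[(X n ⁻¹' B).indicator (fun _ => (1 : ℝ)) | 𝓕 (n - 1)]
        =ᵐ[P] fun ω => (p n (X (n - 1) ω) B).toReal) :
    TendstoInMeasure P
      (fun n ω => (X n ω - ∑ k ∈ Finset.Icc 1 n, m k) / b n) atTop 0 :=
  monotone_lln_markov_chain_general P μ hμ2 m m₂ v hm hm₂ hv b hb1 hbmono hbtop hsum 𝓕 X hXmeas hX1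
    p hpint hpmean hpsq hcond
end

section
/- Let μ and ν be Borel probability measures on ℝ, and let (ρ_x)_{x∈ℝ} be a family of Borel probability measures on ℝ such that x ↦ ρ_x(B) is Borel measurable for every Borel set B, and such that for every z in the upper half-plane ℂ⁺ and every x ∈ ℝ, G_{ρ_x}(z) = 1 / (F_ν(z) − x), where F_ν = 1/G_ν. Then the Borel probability measure τ defined by τ(B) = ∫_ℝ ρ_x(B) μ(dx) satisfies G_τ(z) = G_μ(F_ν(z)) for all z ∈ ℂ⁺. -/
open MeasureTheory Complex ProbabilityTheory

/-- If `(ρ_x)_{x ∈ ℝ}` is a measurable family of Borel probability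
measures on `ℝ` whose Cauchy transforms satisfy `G_{ρ_x}(z) = 1/(F_ν(z) - x)` on the
upper half-plane, where `F_ν = 1/G_ν`, then the mixture `τ(B) = ∫ ρ_x(B) μ(dx)`
satisfies `G_τ(z) = G_μ(F_ν(z))` for all `z ∈ ℂ⁺`. -/
theorem cauchyTransform_mixture_eq_comp
    (μ ν : Measure ℝ) [IsProbabilityMeasure μ] [IsProbabilityMeasure ν]
    (ρ : ℝ → Measure ℝ) [∀ x, IsProbabilityMeasure (ρ x)]
    (hρmeas : ∀ B : Set ℝ, MeasurableSet B → Measurable fun x => ρ x B)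
    (hρ : ∀ z : ℂ, 0 < z.im → ∀ x : ℝ,
      (∫ t : ℝ, (z - (t : ℂ))⁻¹ ∂(ρ x))
        = ((∫ t : ℝ, (z - (t : ℂ))⁻¹ ∂ν)⁻¹ - (x : ℂ))⁻¹)
    (τ : Measure ℝ) [IsProbabilityMeasure τ]
    (hτ : ∀ B : Set ℝ, MeasurableSet B → τ B = ∫⁻ x, ρ x B ∂μ) :
    ∀ z : ℂ, 0 < z.im →
      (∫ t : ℝ, (z - (t : ℂ))⁻¹ ∂τ)
        = ∫ x : ℝ, ((∫ t : ℝ, (z - (t : ℂ))⁻¹ ∂ν)⁻¹ - (x : ℂ))⁻¹ ∂μ := by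
  intro z hz
  -- the integrand
  set f : ℝ → ℂ := fun t => (z - (t : ℂ))⁻¹ with hf
  have hne : ∀ t : ℝ, z - (t : ℂ) ≠ 0 := by
    intro t h
    have : (z - (t : ℂ)).im = 0 := by rw [h]; simp
    simp only [Complex.sub_im, Complex.ofReal_im, sub_zero] at this
    exact hz.ne' this
  have hfc : Continuous f := by
    apply Continuous.inv₀
    · fun_prop
    · exact hne
  have hfb : ∀ t : ℝ, ‖f t‖ ≤ (z.im)⁻¹ := by
    intro t
    rw [hf]
    simp only [norm_inv]
    rw [inv_le_inv₀ (norm_pos_iff.2 (hne t)) hz]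
    calc z.im = (z - (t : ℂ)).im := by simp
      _ ≤ |(z - (t : ℂ)).im| := le_abs_self _
      _ ≤ ‖z - (t : ℂ)‖ := Complex.abs_im_le_norm _
  have hint : ∀ (m : Measure ℝ) [IsProbabilityMeasure m], Integrable f m := by
    intro m _
    exact (integrable_const ((z.im)⁻¹)).mono' hfc.aestronglyMeasurable
      (Filter.Eventually.of_forall hfb)
  -- the kernel
  set κ : Kernel ℝ ℝ := ⟨ρ, Measure.measurable_of_measurable_coe ρ
    (fun s hs => hρmeas s hs)⟩ with hκ
  have hκapp : ∀ x, κ x = ρ x := fun x => rfl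
  have : IsMarkovKernel κ := ⟨fun x => by rw [hκapp]; infer_instance⟩
  -- τ is the second marginal of μ ⊗ₘ κ
  have hτeq : τ = (μ ⊗ₘ κ).map Prod.snd := by
    ext s hs
    rw [Measure.map_apply measurable_snd hs, hτ s hs,
      Measure.compProd_apply (measurable_snd hs)]
    rfl
  have hint2 : Integrable (fun p : ℝ × ℝ => f p.2) (μ ⊗ₘ κ) :=
    (integrable_const ((z.im)⁻¹)).mono' (hfc.comp continuous_snd).aestronglyMeasurable
      (Filter.Eventually.of_forall (fun p => hfb p.2))
  rw [hτeq, integral_map measurable_snd.aemeasurable hfc.aestronglyMeasurable,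
    Measure.integral_compProd hint2]
  exact integral_congr_ae (Filter.Eventually.of_forall (fun x => hρ z hz x))
end

section
/- Let μ be a Borel probability measure on ℝ with finite second moment, let x ∈ ℝ, and let ρ be a Borel probability measure on ℝ such that 1/G_ρ(z) = 1/G_μ(z) − x for all z in the upper half-plane ℂ⁺. Then ρ has finite second moment, the mean of ρ equals the mean of μ plus x, the variance of ρ equals the variance of μ, and the second moment of ρ equals m₂(μ) + 2x·m(μ) + x², where m(μ) and m₂(μ) denote the mean and second moment of μ. -/
open MeasureTheory ProbabilityTheory Complex
open Filter Topology Bornology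

/-!
Let `ν` be a probability measure with finite second moment and `z = iy`, `y → ∞`. Then
`z³ (G_ν(z) - 1/z - m(ν)/z²) = ∫ t² z/(z - t) dν`, and since `|z/(z - t)| ≤ 1` dominated
convergence gives `G_ν(z) = 1/z + m(ν)/z² + m₂(ν)/z³ + o(z⁻³)`. Substituting this expansion for
`μ` into `G_ρ = G_μ / (1 - x G_μ)` yields the same kind of expansion for `ρ`, with coefficients
`m(μ) + x` and `m₂(μ) + 2x m(μ) + x²`. The real part of the remainder of such an expansion for `ρ`
is `∫ y²t²/(t² + y²) dρ`, so by Fatou's lemma `ρ` has a finite second moment; the expansion of `ρ`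
itself then applies, and its coefficients are unique.
-/

noncomputable def cauchyTransform (ν : Measure ℝ) (z : ℂ) : ℂ := ∫ t : ℝ, (z - t)⁻¹ ∂ν

/-- This is `z³ (g - 1/z - m/z²)`, which tends to `m₂` iff `g = 1/z + m/z² + m₂/z³ + o(z⁻³)`. -/
def cauchyRemainder (m z g : ℂ) : ℂ := z ^ 2 * (z * g - 1) - m * z

lemma norm_inv_sub_ofReal_le {z : ℂ} (hz : 0 < z.im) (t : ℝ) : ‖(z - t)⁻¹‖ ≤ z.im⁻¹ := by
  rw [norm_inv]
  refine inv_anti₀ hz ?_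
  simpa [abs_of_pos hz] using abs_im_le_norm (z - t)

lemma norm_mul_I_mul_inv_sub_ofReal_le_one (y t : ℝ) : ‖(y * I : ℂ) * (y * I - t)⁻¹‖ ≤ 1 := by
  rw [← div_eq_mul_inv, norm_div]
  refine div_le_one_of_le₀ ?_ (norm_nonneg _)
  simpa using abs_im_le_norm ((y * I : ℂ) - t)

lemma re_sq_mul_mul_inv_sub_ofReal_sub_one {y : ℝ} (hy : 0 < y) (t : ℝ) :
    ((y * I : ℂ) ^ 2 * ((y * I) * ((y * I) - t)⁻¹ - 1)).re = y ^ 2 * t ^ 2 / (t ^ 2 + y ^ 2) := by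
  have hpos : 0 < t ^ 2 + y ^ 2 := by positivity
  simp only [pow_two, mul_re, mul_im, sub_re, sub_im, inv_re, inv_im, normSq_apply, ofReal_re,
    ofReal_im, I_re, I_im, one_re, one_im, mul_zero, mul_one, zero_mul, sub_zero, zero_sub,
    add_zero, zero_add, sub_self, neg_mul, mul_neg, neg_neg]
  field_simp
  ring

lemma tendsto_ofReal_mul_I_atTop_cobounded :
    Tendsto (fun y : ℝ => (y * I : ℂ)) atTop (cobounded ℂ) := by
  rw [← tendsto_norm_atTop_iff_cobounded]
  simpa using tendsto_abs_atTop_atTop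

lemma tendsto_mul_inv_sub_cobounded {𝕜 : Type*} [NormedField 𝕜] (a : 𝕜) :
    Tendsto (fun z : 𝕜 => z * (z - a)⁻¹) (cobounded 𝕜) (𝓝 1) := by
  have h : Tendsto (fun z : 𝕜 => (1 - a * z⁻¹)⁻¹) (cobounded 𝕜) (𝓝 1) := by
    simpa using ((tendsto_inv₀_cobounded.const_mul a).const_sub 1).inv₀ (by simp)
  refine h.congr' ?_
  filter_upwards [eventually_ne_cobounded 0] with z hz
  field_simp

lemma tendsto_sq_mul_sq_div_sq_add_sq (t : ℝ) :
    Tendsto (fun y : ℝ => y ^ 2 * t ^ 2 / (t ^ 2 + y ^ 2)) atTop (𝓝 (t ^ 2)) := by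
  have h := ((tendsto_mul_inv_sub_cobounded (-t ^ 2)).comp
    ((tendsto_pow_atTop two_ne_zero).mono_right IsOrderBornology.atTop_le_cobounded)).const_mul
    (t ^ 2)
  rw [mul_one] at h
  refine h.congr fun y => ?_
  simp only [Function.comp_apply, sub_neg_eq_add]
  ring

theorem integrable_of_tendsto_integral_of_nonneg {α ι : Type*} [MeasurableSpace α]
    {μ : Measure α} {u : Filter ι} [u.IsCountablyGenerated] [u.NeBot] {F : ι → α → ℝ}
    {f : α → ℝ} {L : ℝ} (hF : ∀ i, Integrable (F i) μ) (hF0 : ∀ i, 0 ≤ᵐ[μ] F i)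
    (hFf : ∀ᵐ a ∂μ, Tendsto (fun i => F i a) u (𝓝 (f a)))
    (hL : Tendsto (fun i => ∫ a, F i a ∂μ) u (𝓝 L)) : Integrable f μ := by
  refine ⟨aestronglyMeasurable_of_tendsto_ae u (fun i => (hF i).1) hFf, ?_⟩
  have hlint (i : ι) : ∫⁻ a, ‖F i a‖ₑ ∂μ = ENNReal.ofReal (∫ a, F i a ∂μ) := by
    rw [ofReal_integral_eq_lintegral_ofReal (hF i) (hF0 i)]
    exact lintegral_congr_ae ((hF0 i).mono fun a ha => Real.enorm_of_nonneg ha)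
  calc ∫⁻ a, ‖f a‖ₑ ∂μ = ∫⁻ a, liminf (fun i => ‖F i a‖ₑ) u ∂μ :=
        lintegral_congr_ae (hFf.mono fun a ha => ha.enorm.liminf_eq.symm)
    _ ≤ liminf (fun i => ∫⁻ a, ‖F i a‖ₑ ∂μ) u :=
        lintegral_liminf_le' fun i => (hF i).1.aemeasurable.enorm
    _ = ENNReal.ofReal L := by
        simp_rw [hlint]
        exact ((ENNReal.continuous_ofReal.tendsto L).comp hL).liminf_eq
    _ < ⊤ := ENNReal.ofReal_lt_top

section Asymptotics

variable {α : Type*} {l : Filter α} {z g : α → ℂ} {m m₂ : ℂ}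

theorem tendsto_mul_of_tendsto_cauchyRemainder (hz : Tendsto z l (cobounded ℂ))
    (hg : Tendsto (fun a => cauchyRemainder m (z a) (g a)) l (𝓝 m₂)) :
    Tendsto (fun a => z a * g a) l (𝓝 1) := by
  have hzinv : Tendsto (fun a => (z a)⁻¹) l (𝓝 0) := tendsto_inv₀_cobounded.comp hz
  have h : Tendsto (fun a => 1 + m * (z a)⁻¹ + cauchyRemainder m (z a) (g a) * (z a)⁻¹ ^ 2)
      l (𝓝 1) := by
    simpa using ((hzinv.const_mul m).const_add 1).add (hg.mul (hzinv.pow 2))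
  refine h.congr' ?_
  filter_upwards [hz.eventually_ne_cobounded 0] with a ha
  simp only [cauchyRemainder]
  field_simp
  ring

theorem tendsto_cauchyRemainder_of_inv_eq_inv_sub {h : α → ℂ} {x : ℂ}
    (hz : Tendsto z l (cobounded ℂ))
    (hg : Tendsto (fun a => cauchyRemainder m (z a) (g a)) l (𝓝 m₂))
    (hgh : ∀ᶠ a in l, (h a)⁻¹ = (g a)⁻¹ - x) :
    Tendsto (fun a => cauchyRemainder (m + x) (z a) (h a)) l (𝓝 (m₂ + 2 * x * m + x ^ 2)) := by
  have hzinv : Tendsto (fun a => (z a)⁻¹) l (𝓝 0) := tendsto_inv₀_cobounded.comp hz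
  have hzg := tendsto_mul_of_tendsto_cauchyRemainder hz hg
  have hg0 : Tendsto g l (𝓝 0) := by
    have h : Tendsto (fun a => z a * g a * (z a)⁻¹) l (𝓝 0) := by simpa using hzg.mul hzinv
    refine h.congr' ?_
    filter_upwards [hz.eventually_ne_cobounded 0] with a ha
    field_simp
  have hden : Tendsto (fun a => 1 - g a * x) l (𝓝 1) := by
    simpa using (hg0.mul_const x).const_sub 1
  have hlim : Tendsto (fun a => (cauchyRemainder m (z a) (g a) + x * m
      + x * cauchyRemainder m (z a) (g a) * (z a)⁻¹ + x * (m + x) * (z a * g a))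
      / (1 - g a * x)) l (𝓝 (m₂ + 2 * x * m + x ^ 2)) := by
    rw [show m₂ + 2 * x * m + x ^ 2 = (m₂ + x * m + x * m₂ * 0 + x * (m + x) * 1) / 1 by ring]
    exact (((hg.add_const (x * m)).add ((hg.const_mul x).mul hzinv)).add
      (hzg.const_mul (x * (m + x)))).div hden one_ne_zero
  refine hlim.congr' ?_
  filter_upwards [hz.eventually_ne_cobounded 0, hzg.eventually_ne one_ne_zero,
    hden.eventually_ne one_ne_zero, hgh] with a hza hzga hdena hgha
  have hga : g a ≠ 0 := right_ne_zero_of_mul hzga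
  have hha : h a = g a / (1 - g a * x) := by
    rw [← inv_inv (h a), hgha]
    field_simp
  rw [hha]
  simp only [cauchyRemainder]
  field_simp
  ring

theorem eq_of_tendsto_cauchyRemainder [l.NeBot] {m' m₂' : ℂ} (hz : Tendsto z l (cobounded ℂ))
    (h : Tendsto (fun a => cauchyRemainder m (z a) (g a)) l (𝓝 m₂))
    (h' : Tendsto (fun a => cauchyRemainder m' (z a) (g a)) l (𝓝 m₂')) :
    m = m' ∧ m₂ = m₂' := by
  have hdiff : Tendsto (fun _ => m' - m) l (𝓝 0) := by
    have hlim := (h.sub h').mul (tendsto_inv₀_cobounded.comp hz)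
    rw [mul_zero] at hlim
    refine hlim.congr' ?_
    filter_upwards [hz.eventually_ne_cobounded 0] with a ha
    simp only [Function.comp_apply, cauchyRemainder]
    field_simp
    ring
  obtain rfl : m = m' := (sub_eq_zero.1 (tendsto_nhds_unique tendsto_const_nhds hdiff)).symm
  exact ⟨rfl, tendsto_nhds_unique h h'⟩

end Asymptotics

lemma integrable_inv_sub_ofReal (ν : Measure ℝ) [IsFiniteMeasure ν] {z : ℂ} (hz : 0 < z.im) :
    Integrable (fun t : ℝ => (z - t)⁻¹) ν :=
  .of_bound (by fun_prop) _ (ae_of_all _ (norm_inv_sub_ofReal_le hz))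

section Moments

variable {ν : Measure ℝ} [IsProbabilityMeasure ν]

lemma integrable_sq_mul_mul_inv_sub_ofReal_sub_one {z : ℂ} (hz : 0 < z.im) :
    Integrable (fun t : ℝ => z ^ 2 * (z * (z - t)⁻¹ - 1)) ν :=
  (((integrable_inv_sub_ofReal ν hz).const_mul z).sub (integrable_const 1)).const_mul _

lemma sq_mul_mul_cauchyTransform_sub_one {z : ℂ} (hz : 0 < z.im) :
    z ^ 2 * (z * cauchyTransform ν z - 1) = ∫ t : ℝ, z ^ 2 * (z * (z - t)⁻¹ - 1) ∂ν := by
  rw [integral_const_mul, integral_sub ((integrable_inv_sub_ofReal ν hz).const_mul z)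
    (integrable_const 1), integral_const_mul]
  simp [cauchyTransform]

lemma cauchyRemainder_eq_integral (hν : Integrable (fun t : ℝ => t ^ 2) ν) {z : ℂ}
    (hz : 0 < z.im) :
    cauchyRemainder (∫ t, t ∂ν : ℝ) z (cauchyTransform ν z) =
      ∫ t : ℝ, (t : ℂ) ^ 2 * (z * (z - t)⁻¹) ∂ν := by
  have hint : Integrable (fun t : ℝ => t) ν :=
    ((memLp_two_iff_integrable_sq aestronglyMeasurable_id).2 hν).integrable one_le_two
  have hne (t : ℝ) : z - t ≠ 0 := fun h => by simpa [hz.ne'] using congrArg im h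
  calc cauchyRemainder (∫ t, t ∂ν : ℝ) z (cauchyTransform ν z)
      = (∫ t : ℝ, z ^ 2 * (z * (z - t)⁻¹ - 1) ∂ν) - ∫ t : ℝ, (t : ℂ) * z ∂ν := by
        rw [cauchyRemainder, sq_mul_mul_cauchyTransform_sub_one hz, integral_mul_const,
          integral_complex_ofReal]
    _ = ∫ t : ℝ, (z ^ 2 * (z * (z - t)⁻¹ - 1) - t * z) ∂ν :=
        (integral_sub (integrable_sq_mul_mul_inv_sub_ofReal_sub_one hz)
          (hint.ofReal.mul_const z)).symm
    _ = ∫ t : ℝ, (t : ℂ) ^ 2 * (z * (z - t)⁻¹) ∂ν := by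
        refine integral_congr_ae (ae_of_all _ fun t => ?_)
        field_simp [hne t]
        ring

theorem tendsto_cauchyRemainder_mul_I (hν : Integrable (fun t : ℝ => t ^ 2) ν) :
    Tendsto (fun y : ℝ => cauchyRemainder (∫ t, t ∂ν : ℝ) (y * I) (cauchyTransform ν (y * I)))
      atTop (𝓝 (∫ t, t ^ 2 ∂ν : ℝ)) := by
  have hlim : Tendsto (fun y : ℝ => ∫ t : ℝ, (t : ℂ) ^ 2 * ((y * I) * ((y * I) - t)⁻¹) ∂ν)
      atTop (𝓝 (∫ t : ℝ, (t : ℂ) ^ 2 ∂ν)) := by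
    refine tendsto_integral_filter_of_dominated_convergence (fun t => t ^ 2)
      (Eventually.of_forall fun y => by fun_prop) (Eventually.of_forall fun y => ?_) hν
      (ae_of_all _ fun t => ?_)
    · refine ae_of_all _ fun t => ?_
      simpa [norm_mul] using
        mul_le_mul_of_nonneg_left (norm_mul_I_mul_inv_sub_ofReal_le_one y t) (sq_nonneg t)
    · simpa using ((tendsto_mul_inv_sub_cobounded (t : ℂ)).comp
        tendsto_ofReal_mul_I_atTop_cobounded).const_mul ((t : ℂ) ^ 2)
  have hsq : (∫ t : ℝ, (t : ℂ) ^ 2 ∂ν) = (∫ t, t ^ 2 ∂ν : ℝ) := by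
    exact_mod_cast integral_complex_ofReal
  rw [hsq] at hlim
  refine hlim.congr' ?_
  filter_upwards [eventually_gt_atTop 0] with y hy
  rw [cauchyRemainder_eq_integral hν (by simpa using hy)]

lemma re_cauchyRemainder_mul_I (c : ℝ) {y : ℝ} (hy : 0 < y) :
    (cauchyRemainder c (y * I) (cauchyTransform ν (y * I))).re =
      ∫ t, y ^ 2 * t ^ 2 / (t ^ 2 + y ^ 2) ∂ν := by
  have hz : 0 < (y * I : ℂ).im := by simpa using hy
  rw [cauchyRemainder, sub_re, sq_mul_mul_cauchyTransform_sub_one hz,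
    ← RCLike.re_to_complex, ← integral_re (integrable_sq_mul_mul_inv_sub_ofReal_sub_one hz)]
  have hmean : ((c : ℂ) * (y * I)).re = 0 := by simp
  rw [hmean, sub_zero]
  exact integral_congr_ae (ae_of_all _ (re_sq_mul_mul_inv_sub_ofReal_sub_one hy))

theorem integrable_sq_of_tendsto_cauchyRemainder (c : ℝ) {L : ℂ}
    (h : Tendsto (fun y : ℝ => cauchyRemainder c (y * I) (cauchyTransform ν (y * I)))
      atTop (𝓝 L)) :
    Integrable (fun t : ℝ => t ^ 2) ν := by
  refine integrable_of_tendsto_integral_of_nonneg (u := atTop) (L := L.re)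
    (F := fun y t => y ^ 2 * t ^ 2 / (t ^ 2 + y ^ 2)) (fun y => ?_)
    (fun y => ae_of_all _ fun t => by positivity)
    (ae_of_all _ tendsto_sq_mul_sq_div_sq_add_sq) ?_
  · refine .of_bound (Measurable.aestronglyMeasurable (by fun_prop)) (y ^ 2)
      (ae_of_all _ fun t => ?_)
    rw [Real.norm_of_nonneg (by positivity)]
    exact div_le_of_le_mul₀ (by positivity) (sq_nonneg y) (by nlinarith [sq_nonneg y, sq_nonneg t])
  · refine ((continuous_re.tendsto L).comp h).congr' ?_
    filter_upwards [eventually_gt_atTop 0] with y hy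
    exact re_cauchyRemainder_mul_I c hy

lemma variance_id_eq_integral_sq_sub (hν : Integrable (fun t : ℝ => t ^ 2) ν) :
    variance id ν = (∫ t, t ^ 2 ∂ν) - (∫ t, t ∂ν) ^ 2 :=
  variance_eq_sub ((memLp_two_iff_integrable_sq aestronglyMeasurable_id).2 hν)

end Moments

/-- If `μ` is a Borel probability measure on `ℝ` with finite second
moment and `ρ` is a Borel probability measure with `1/G_ρ = 1/G_μ - x` on the upper
half-plane (i.e. `ρ = δ_x ▷ μ`), then `ρ` has finite second moment,
`m(ρ) = m(μ) + x`, `var(ρ) = var(μ)`, and `m₂(ρ) = m₂(μ) + 2x·m(μ) + x²`. -/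
theorem moments_of_translated_F_transform
    (μ ρ : Measure ℝ) [IsProbabilityMeasure μ] [IsProbabilityMeasure ρ]
    (hμ2 : Integrable (fun t : ℝ => t ^ 2) μ) (x : ℝ)
    (h : ∀ z : ℂ, 0 < z.im →
      (∫ t : ℝ, (z - (t : ℂ))⁻¹ ∂ρ)⁻¹ = (∫ t : ℝ, (z - (t : ℂ))⁻¹ ∂μ)⁻¹ - (x : ℂ)) :
    Integrable (fun t : ℝ => t ^ 2) ρ ∧
    (∫ t : ℝ, t ∂ρ) = (∫ t : ℝ, t ∂μ) + x ∧
    variance id ρ = variance id μ ∧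
    (∫ t : ℝ, t ^ 2 ∂ρ) = (∫ t : ℝ, t ^ 2 ∂μ) + 2 * x * (∫ t : ℝ, t ∂μ) + x ^ 2 := by
  have hz := tendsto_ofReal_mul_I_atTop_cobounded
  have hρ := tendsto_cauchyRemainder_of_inv_eq_inv_sub
    (h := fun y : ℝ => cauchyTransform ρ (y * I)) (x := x) hz (tendsto_cauchyRemainder_mul_I hμ2) <| by
      filter_upwards [eventually_gt_atTop 0] with y hy
      exact h _ (by simpa using hy)
  have hρ2 : Integrable (fun t : ℝ => t ^ 2) ρ :=
    integrable_sq_of_tendsto_cauchyRemainder ((∫ t, t ∂μ) + x) (by push_cast; exact hρ)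
  obtain ⟨hmean, hsecond⟩ :=
    eq_of_tendsto_cauchyRemainder hz (tendsto_cauchyRemainder_mul_I hρ2) hρ
  norm_cast at hmean hsecond
  refine ⟨hρ2, hmean, ?_, hsecond⟩
  rw [variance_id_eq_integral_sq_sub hρ2, variance_id_eq_integral_sq_sub hμ2, hsecond, hmean]
  ring
end

section
/- Let μ be a Borel probability measure on ℝ with finite second moment and mean m. Let p be a Markov transition kernel on ℝ satisfying ∫ y p(x,dy) = x + m and ∫ y² p(x,dy) = x² + 2 m x + m₂(μ) for every x ∈ ℝ, and let (X_n)_{n≥1} be a Markov chain with X_1 distributed as μ and with the conditional distribution of X_n given X_1, …, X_{n-1} equal to p(X_{n-1},·) for each n ≥ 2. Then X_n/n converges to m in probability as n → ∞. -/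
/-!
Write `L = m₂ - m²`. One step of the kernel shifts the mean by `m` and adds exactly `L` to the
centred second moment: `∫ (y - (c + m))² p(x, dy) = (x - c)² + L`. The conditional distributions
force `law(X_{n+1}) = p ∘ₘ law(X_n)`, so by induction `E (X_n - n m)² = n L`. Hence
`E (X_n / n - m)² = L / n → 0`, and Chebyshev's inequality gives convergence in probability.
Second moments are taken as lower Lebesgue integrals, so square-integrability of `X_n` is never
needed.
-/

open MeasureTheory ProbabilityTheory Filter
open scoped ENNReal Topology

section SecondMoment

variable {ν : Measure ℝ} [IsProbabilityMeasure ν]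

lemma integral_sub_const_sq (h : Integrable (fun y : ℝ => y ^ 2) ν) (c : ℝ) :
    ∫ y, (y - c) ^ 2 ∂ν = ∫ y, y ^ 2 ∂ν - 2 * c * ∫ y, y ∂ν + c ^ 2 := by
  have h1 : Integrable (fun y : ℝ => y) ν :=
    ((memLp_two_iff_integrable_sq aestronglyMeasurable_id).2 h).integrable one_le_two
  have h2 : Integrable (fun y : ℝ => 2 * y * c) ν := (h1.const_mul 2).mul_const c
  have h3 : Integrable (fun y : ℝ => y ^ 2 - 2 * y * c) ν := h.sub h2
  simp_rw [sub_sq]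
  rw [integral_add h3 (integrable_const _), integral_sub h h2, integral_mul_const,
    integral_const_mul]
  simp
  ring

lemma lintegral_ofReal_sub_const_sq (h : Integrable (fun y : ℝ => y ^ 2) ν) (c : ℝ) :
    ∫⁻ y, ENNReal.ofReal ((y - c) ^ 2) ∂ν
      = ENNReal.ofReal (∫ y, y ^ 2 ∂ν - 2 * c * ∫ y, y ∂ν + c ^ 2) := by
  have hsq : Integrable (fun y : ℝ => (y - c) ^ 2) ν :=
    (((memLp_two_iff_integrable_sq aestronglyMeasurable_id).2 h).sub (memLp_const c)).integrable_sq
  rw [← integral_sub_const_sq h c,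
    ofReal_integral_eq_lintegral_ofReal hsq (ae_of_all _ fun _ => sq_nonneg _)]

end SecondMoment

lemma map_eq_bind_of_condExp_indicator_ae_eq {Ω α β : Type*} {m mΩ : MeasurableSpace Ω}
    [MeasurableSpace α] [MeasurableSpace β] (P : Measure Ω) [IsFiniteMeasure P]
    (κ : Kernel α β) [IsFiniteKernel κ] {X : Ω → β} {Y : Ω → α}
    (hX : Measurable X) (hY : Measurable Y) (hm : m ≤ mΩ)
    (h : ∀ B, MeasurableSet B →
      P[(X ⁻¹' B).indicator (fun _ => (1 : ℝ)) | m] =ᵐ[P] fun ω => (κ (Y ω) B).toReal) :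
    P.map X = (P.map Y).bind κ := by
  ext B hB
  refine (ENNReal.toReal_eq_toReal_iff' (measure_ne_top _ _) (measure_ne_top _ _)).mp ?_
  calc (P.map X B).toReal
      = ∫ ω, (X ⁻¹' B).indicator (fun _ => (1 : ℝ)) ω ∂P := by
        rw [Measure.map_apply hX hB]; exact (integral_indicator_one (hX hB)).symm
    _ = ∫ ω, (κ (Y ω) B).toReal ∂P := by
        rw [← integral_condExp hm]; exact integral_congr_ae (h B hB)
    _ = ((P.map Y).bind κ B).toReal := by
        rw [Measure.bind_apply hB κ.aemeasurable, lintegral_map (κ.measurable_coe hB) hY]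
        exact integral_toReal ((κ.measurable_coe hB).comp hY).aemeasurable
          (ae_of_all _ fun _ => measure_lt_top _ _)

section KernelStep

variable {p : Kernel ℝ ℝ} [IsMarkovKernel p] {m m₂ : ℝ}

lemma lintegral_ofReal_sub_sq_kernel
    (hpint : ∀ x, Integrable (fun y : ℝ => y ^ 2) (p x))
    (hpmean : ∀ x, ∫ y, y ∂(p x) = x + m)
    (hpsq : ∀ x, ∫ y, y ^ 2 ∂(p x) = x ^ 2 + 2 * m * x + m₂) (x c : ℝ) :
    ∫⁻ y, ENNReal.ofReal ((y - (c + m)) ^ 2) ∂(p x)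
      = ENNReal.ofReal ((x - c) ^ 2 + (m₂ - m ^ 2)) := by
  rw [lintegral_ofReal_sub_const_sq (hpint x), hpsq, hpmean]
  ring_nf

lemma sq_le_of_kernel_moments
    (hpint : ∀ x, Integrable (fun y : ℝ => y ^ 2) (p x))
    (hpmean : ∀ x, ∫ y, y ∂(p x) = x + m)
    (hpsq : ∀ x, ∫ y, y ^ 2 ∂(p x) = x ^ 2 + 2 * m * x + m₂) : m ^ 2 ≤ m₂ := by
  have hvar : 0 ≤ ∫ y, (y - m) ^ 2 ∂(p 0) := integral_nonneg fun y => sq_nonneg (y - m)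
  rw [integral_sub_const_sq (hpint 0), hpsq, hpmean] at hvar
  nlinarith

lemma lintegral_ofReal_sub_sq_bind
    (hpint : ∀ x, Integrable (fun y : ℝ => y ^ 2) (p x))
    (hpmean : ∀ x, ∫ y, y ∂(p x) = x + m)
    (hpsq : ∀ x, ∫ y, y ^ 2 ∂(p x) = x ^ 2 + 2 * m * x + m₂)
    (ν : Measure ℝ) [IsProbabilityMeasure ν] (c : ℝ) :
    ∫⁻ y, ENNReal.ofReal ((y - (c + m)) ^ 2) ∂(ν.bind p)
      = ∫⁻ x, ENNReal.ofReal ((x - c) ^ 2) ∂ν + ENNReal.ofReal (m₂ - m ^ 2) := by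
  have hL : 0 ≤ m₂ - m ^ 2 := sub_nonneg.2 (sq_le_of_kernel_moments hpint hpmean hpsq)
  rw [Measure.lintegral_bind p.aemeasurable (by fun_prop)]
  simp_rw [lintegral_ofReal_sub_sq_kernel hpint hpmean hpsq, ENNReal.ofReal_add (sq_nonneg _) hL]
  rw [lintegral_add_right _ measurable_const, lintegral_const, measure_univ, mul_one]

lemma lintegral_ofReal_sub_nat_mul_sq
    (hpint : ∀ x, Integrable (fun y : ℝ => y ^ 2) (p x))
    (hpmean : ∀ x, ∫ y, y ∂(p x) = x + m)
    (hpsq : ∀ x, ∫ y, y ^ 2 ∂(p x) = x ^ 2 + 2 * m * x + m₂)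
    {ν : ℕ → Measure ℝ} [∀ n, IsProbabilityMeasure (ν n)]
    (hν : ∀ n, 1 ≤ n → ν (n + 1) = (ν n).bind p)
    (hν₁ : ∫⁻ y, ENNReal.ofReal ((y - m) ^ 2) ∂(ν 1) = ENNReal.ofReal (m₂ - m ^ 2))
    (n : ℕ) (hn : 1 ≤ n) :
    ∫⁻ y, ENNReal.ofReal ((y - n * m) ^ 2) ∂(ν n) = n * ENNReal.ofReal (m₂ - m ^ 2) := by
  induction n, hn using Nat.le_induction with
  | base => simpa using hν₁
  | succ n hn ih =>
    rw [hν n hn, Nat.cast_succ, add_mul, one_mul,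
      lintegral_ofReal_sub_sq_bind hpint hpmean hpsq, ih, Nat.cast_succ, add_one_mul]

end KernelStep

lemma lintegral_ofReal_div_sub_sq {Ω : Type*} {mΩ : MeasurableSpace Ω} (P : Measure Ω)
    (Y : Ω → ℝ) {a : ℝ} (ha : a ≠ 0) (c : ℝ) :
    ∫⁻ ω, ENNReal.ofReal ((Y ω / a - c) ^ 2) ∂P
      = (∫⁻ ω, ENNReal.ofReal ((Y ω - a * c) ^ 2) ∂P) * ENNReal.ofReal (1 / a ^ 2) := by
  rw [← lintegral_mul_const' _ _ ENNReal.ofReal_ne_top]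
  refine lintegral_congr fun ω => ?_
  rw [← ENNReal.ofReal_mul (sq_nonneg _)]
  congr 1
  field_simp

lemma tendstoInMeasure_const_of_lintegral_sq_sub {Ω ι : Type*} {mΩ : MeasurableSpace Ω}
    {P : Measure Ω} {l : Filter ι} {Y : ι → Ω → ℝ} (hY : ∀ i, AEMeasurable (Y i) P) {c : ℝ}
    (h : Tendsto (fun i => ∫⁻ ω, ENNReal.ofReal ((Y i ω - c) ^ 2) ∂P) l (𝓝 0)) :
    TendstoInMeasure P Y l (fun _ => c) := by
  rw [tendstoInMeasure_iff_dist]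
  intro ε hε
  have hε2 : ENNReal.ofReal (ε ^ 2) ≠ 0 := (ENNReal.ofReal_pos.2 (by positivity)).ne'
  have hmarkov : ∀ i, P {ω | ε ≤ dist (Y i ω) c}
      ≤ (∫⁻ ω, ENNReal.ofReal ((Y i ω - c) ^ 2) ∂P) / ENNReal.ofReal (ε ^ 2) := by
    intro i
    refine le_trans (measure_mono fun ω hω => ?_)
      (meas_ge_le_lintegral_div (by fun_prop) hε2 ENNReal.ofReal_ne_top)
    replace hω : ε ≤ |Y i ω - c| := hω
    exact ENNReal.ofReal_le_ofReal (by nlinarith [sq_abs (Y i ω - c)])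
  have hlim := ENNReal.Tendsto.div_const h (Or.inr hε2)
  rw [ENNReal.zero_div] at hlim
  exact tendsto_of_tendsto_of_tendsto_of_le_of_le tendsto_const_nhds hlim
    (fun _ => zero_le) hmarkov

/-- Let `μ` be a Borel probability measure on `ℝ` with finite second
moment and mean `m`, and let `p` be a Markov transition kernel with
`∫ y p(x,dy) = x + m` and `∫ y² p(x,dy) = x² + 2mx + m₂(μ)` for every `x`. If
`(X_n)_{n≥1}` is a Markov chain with `X_1 ∼ μ` and the conditional distribution of
`X_n` given `X_1, …, X_{n-1}` equal to `p(X_{n-1}, ·)` for `n ≥ 2`, then `X_n / n`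
converges to `m` in probability. -/
theorem monotone_weak_lln_iid
    {Ω : Type*} {mΩ : MeasurableSpace Ω} (P : Measure Ω) [IsProbabilityMeasure P]
    (μ : Measure ℝ) [IsProbabilityMeasure μ]
    (hμ2 : Integrable (fun t : ℝ => t ^ 2) μ)
    (m m₂ : ℝ) (hm : m = ∫ t : ℝ, t ∂μ) (hm₂ : m₂ = ∫ t : ℝ, t ^ 2 ∂μ)
    (p : Kernel ℝ ℝ) [IsMarkovKernel p]
    (hpint : ∀ x : ℝ, Integrable (fun y : ℝ => y ^ 2) (p x))
    (hpmean : ∀ x : ℝ, (∫ y : ℝ, y ∂(p x)) = x + m)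
    (hpsq : ∀ x : ℝ, (∫ y : ℝ, y ^ 2 ∂(p x)) = x ^ 2 + 2 * m * x + m₂)
    (X : ℕ → Ω → ℝ) (hXmeas : ∀ n, Measurable (X n))
    (hX1 : P.map (X 1) = μ)
    (hcond : ∀ n, 2 ≤ n → ∀ B : Set ℝ, MeasurableSet B →
      P[(X n ⁻¹' B).indicator (fun _ => (1 : ℝ)) |
          ⨆ i ∈ Set.Icc 1 (n - 1), MeasurableSpace.comap (X i) Real.measurableSpace]
        =ᵐ[P] fun ω => (p (X (n - 1) ω) B).toReal) :
    TendstoInMeasure P (fun n ω => X n ω / n) atTop (fun _ => m) := by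
  have hlaw : ∀ n, 1 ≤ n → P.map (X (n + 1)) = (P.map (X n)).bind p := fun n hn =>
    map_eq_bind_of_condExp_indicator_ae_eq P p (hXmeas _) (hXmeas n)
      (iSup₂_le fun i _ => (hXmeas i).comap_le) (by simpa using hcond (n + 1) (by omega))
  have hμ : ∫⁻ y, ENNReal.ofReal ((y - m) ^ 2) ∂μ = ENNReal.ofReal (m₂ - m ^ 2) := by
    rw [lintegral_ofReal_sub_const_sq hμ2, ← hm, ← hm₂]
    ring_nf
  have hprob (n : ℕ) : IsProbabilityMeasure (P.map (X n)) :=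
    Measure.isProbabilityMeasure_map (hXmeas n).aemeasurable
  have hmoment := lintegral_ofReal_sub_nat_mul_sq hpint hpmean hpsq
    (ν := fun n => P.map (X n)) hlaw (hX1 ▸ hμ)
  refine tendstoInMeasure_const_of_lintegral_sq_sub (fun n => by fun_prop) ?_
  have hscaled : ∀ n : ℕ, 1 ≤ n →
      ∫⁻ ω, ENNReal.ofReal ((X n ω / n - m) ^ 2) ∂P = ENNReal.ofReal ((m₂ - m ^ 2) / n) := by
    intro n hn
    have hn' : (n : ℝ) ≠ 0 := Nat.cast_ne_zero.2 (by omega)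
    have hmap := lintegral_map (μ := P) (f := fun y => ENNReal.ofReal ((y - n * m) ^ 2))
      (by fun_prop) (hXmeas n)
    rw [lintegral_ofReal_div_sub_sq P (X n) hn', ← hmap, hmoment n hn, ← ENNReal.ofReal_natCast,
      ← ENNReal.ofReal_mul (by positivity), ← ENNReal.ofReal_mul' (by positivity)]
    congr 1
    field_simp
  refine (tendsto_congr' ((eventually_ge_atTop 1).mono hscaled)).2 ?_
  simpa using ENNReal.tendsto_ofReal (tendsto_const_div_atTop_nhds_zero_nat (m₂ - m ^ 2))
end
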